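/- Let 0 < ρ̲ < ρ̄, C > 0, and let ρ = (ρ_i)_{i≥1} with ρ_i ∈ [ρ̲, ρ̄], ∑_j h_j < ∞, and m(ρ) := ∑_{i=0}^∞ (i − C) h_i = 0 (the series converging absolutely). Suppose there exists i ≥ 1 with ρ_i < ρ̄ and ρ_{i+1} > ρ̲. Then there exist ε, δ > 0 such that the perturbed sequence ρ̃ with ρ̃_j = ρ_j for j ∉ {i, i+1}, ρ̃_i = ρ_i + ε, and ρ̃_{i+1} = ρ_{i+1} − δ satisfies m(ρ̃) = 0 and f(ρ̃) > f(ρ), where f(ρ) := ∑_{j=0}^∞ h_j = 1/π_0. In particular ρ is not optimal for minimizing π_0 subject to ∑_i i π_i ≤ C. -/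

import Mathlib

/-- `hseq ρ i = ∏_{j=1}^i ρ_j`, with `hseq ρ 0 = 1`. -/
noncomputable def hseq (ρ : ℕ → ℝ) (i : ℕ) : ℝ := ∏ j ∈ Finset.Icc 1 i, ρ j

/-- The perturbed sequence: `ρ̃_i = ρ_i + ε`, `ρ̃_{i+1} = ρ_{i+1} - δ`, and
`ρ̃_j = ρ_j` otherwise. -/
noncomputable def pert (ρ : ℕ → ℝ) (i : ℕ) (ε δ : ℝ) (j : ℕ) : ℝ :=
  if j = i then ρ i + ε else if j = i + 1 then ρ (i + 1) - δ else ρ j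

/-!
Raising `ρ_i` by the factor `1 + t` and adjusting `ρ_{i+1}` multiplies `h_i` by `1 + t` and
every later `h_j` by one common factor `c`. With `B = (i - C) h_i`, `S = ∑_{j>i} h_j` and
`D = ∑_{j>i} (j - C) h_j`, the constraint `m = 0` forces `c = 1 - t B / D`, and then
`f` grows by `t (h_i D - B S) / D`. This is positive because `D > 0` (partial sums of `m` are
negative) and `D > (i - C) S` (the weights beyond `i` exceed `i - C`). For small `t` the new
values stay in `[ρ̲, ρ̄]`.
-/

open Finset Filter Topology

lemma hseq_succ (ρ : ℕ → ℝ) (n : ℕ) : hseq ρ (n + 1) = hseq ρ n * ρ (n + 1) :=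
  prod_Icc_succ_top (by omega) ρ

lemma hseq_pos {ρ : ℕ → ℝ} (hρ : ∀ j, 1 ≤ j → 0 < ρ j) (n : ℕ) : 0 < hseq ρ n :=
  prod_pos fun k hk => hρ k (mem_Icc.1 hk).1

lemma hseq_congr {ρ ρ' : ℕ → ℝ} {n : ℕ} (h : ∀ k, 1 ≤ k → k ≤ n → ρ' k = ρ k) :
    hseq ρ' n = hseq ρ n :=
  prod_congr rfl fun k hk => h k (mem_Icc.1 hk).1 (mem_Icc.1 hk).2

section Pert

variable {ρ : ℕ → ℝ} {i : ℕ} {ε δ : ℝ}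

lemma pert_self : pert ρ i ε δ i = ρ i + ε := if_pos rfl

lemma pert_succ_self : pert ρ i ε δ (i + 1) = ρ (i + 1) - δ := by
  simp [pert]

lemma pert_of_ne {k : ℕ} (h₁ : k ≠ i) (h₂ : k ≠ i + 1) : pert ρ i ε δ k = ρ k := by
  simp [pert, h₁, h₂]

lemma hseq_pert_of_lt {j : ℕ} (hj : j < i) : hseq (pert ρ i ε δ) j = hseq ρ j :=
  hseq_congr fun _ _ hk => pert_of_ne (by omega) (by omega)

lemma hseq_pert_self (hi : 1 ≤ i) {a : ℝ} (ha : ρ i + ε = a * ρ i) :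
    hseq (pert ρ i ε δ) i = a * hseq ρ i := by
  obtain ⟨k, rfl⟩ : ∃ k, i = k + 1 := ⟨i - 1, by omega⟩
  rw [hseq_succ, hseq_succ, hseq_pert_of_lt (Nat.lt_succ_self k), pert_self, ha]
  ring

lemma hseq_pert_of_gt (hi : 1 ≤ i) {c : ℝ}
    (hc : (ρ i + ε) * (ρ (i + 1) - δ) = c * (ρ i * ρ (i + 1))) {j : ℕ} (hj : i < j) :
    hseq (pert ρ i ε δ) j = c * hseq ρ j := by
  obtain ⟨k, rfl⟩ : ∃ k, i = k + 1 := ⟨i - 1, by omega⟩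
  induction j, hj using Nat.le_induction with
  | base =>
    rw [hseq_succ, hseq_succ, hseq_succ, hseq_succ, hseq_pert_of_lt (Nat.lt_succ_self k),
      pert_self, pert_succ_self]
    linear_combination hseq ρ k * hc
  | succ j hj ih =>
    rw [hseq_succ, hseq_succ, ih, pert_of_ne (by omega) (by omega)]
    ring

end Pert

lemma Summable.tsum_eq_of_rescale {g g' : ℕ → ℝ} (hg : Summable g) {n : ℕ} {a c : ℝ}
    (hlt : ∀ j < n, g' j = g j) (hn : g' n = a * g n)
    (hgt : ∀ j, g' (j + (n + 1)) = c * g (j + (n + 1))) :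
    Summable g' ∧
      ∑' j, g' j = ∑' j, g j + (a - 1) * g n + (c - 1) * ∑' j, g (j + (n + 1)) := by
  have htail : Summable fun j => g (j + (n + 1)) := (summable_nat_add_iff (n + 1)).2 hg
  have hg' : Summable g' :=
    (summable_nat_add_iff (n + 1)).1 ((htail.mul_left c).congr fun j => (hgt j).symm)
  refine ⟨hg', ?_⟩
  rw [← hg.sum_add_tsum_nat_add (n + 1), ← hg'.sum_add_tsum_nat_add (n + 1),
    sum_range_succ, sum_range_succ, sum_congr rfl fun j hj => hlt j (mem_range.1 hj), hn,
    tsum_congr hgt, tsum_mul_left]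
  ring

lemma exists_pos_mul_lt_and_lt_div {x y lo hi k : ℝ} (hx : x < hi) (hy : lo < y) :
    ∃ t > 0, (1 + t) * x < hi ∧ lo < (1 - t * k) * y / (1 + t) := by
  have hx' : ∀ᶠ t in 𝓝 (0 : ℝ), (1 + t) * x < hi :=
    ContinuousAt.eventually_lt (by fun_prop) continuousAt_const (by simpa using hx)
  have hy' : ∀ᶠ t in 𝓝 (0 : ℝ), lo < (1 - t * k) * y / (1 + t) :=
    ContinuousAt.eventually_lt continuousAt_const
      (by fun_prop (disch := norm_num)) (by simpa using hy)
  obtain ⟨t, ⟨hxt, hyt⟩, ht⟩ :=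
    (((hx'.and hy').filter_mono nhdsWithin_le_nhds).and
      (self_mem_nhdsWithin (s := Set.Ioi 0))).exists
  exact ⟨t, ht, hxt, hyt⟩

section Moment

variable {h : ℕ → ℝ} (hpos : ∀ j, 0 < h j) {C : ℝ}
include hpos

lemma sum_range_sub_mul_neg (hs : Summable fun j : ℕ => ((j : ℝ) - C) * h j)
    (h0 : ∑' j : ℕ, ((j : ℝ) - C) * h j = 0) {n : ℕ} (hn : 1 ≤ n) :
    ∑ j ∈ range n, ((j : ℝ) - C) * h j < 0 := by
  rcases le_or_gt (n : ℝ) C with hnC | hCn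
  · refine sum_neg (fun j hj => mul_neg_of_neg_of_pos ?_ (hpos j)) ⟨0, mem_range.2 hn⟩
    have : (j : ℝ) < n := by exact_mod_cast mem_range.1 hj
    linarith
  · have htail : 0 < ∑' j : ℕ, ((↑(j + n) : ℝ) - C) * h (j + n) := by
      have hterm : ∀ j : ℕ, 0 < ((↑(j + n) : ℝ) - C) * h (j + n) := fun j =>
        mul_pos (by push_cast; linarith [(j.cast_nonneg : (0 : ℝ) ≤ j)]) (hpos _)
      exact ((summable_nat_add_iff n).2 hs).tsum_pos (fun j => (hterm j).le) 0 (hterm 0)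
    linarith [hs.sum_add_tsum_nat_add n]

lemma mul_tsum_lt_tsum_sub_mul (hs : Summable h)
    (hws : Summable fun j : ℕ => ((j : ℝ) - C) * h j) (n : ℕ) :
    ((n : ℝ) - C) * ∑' j, h (j + (n + 1)) <
      ∑' j : ℕ, ((↑(j + (n + 1)) : ℝ) - C) * h (j + (n + 1)) := by
  have hweight : ∀ j : ℕ, (n : ℝ) - C < (↑(j + (n + 1)) : ℝ) - C := fun j => by
    push_cast; linarith [(j.cast_nonneg : (0 : ℝ) ≤ j)]
  rw [← tsum_mul_left]
  exact Summable.tsum_lt_tsum (i := 0)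
    (fun j => mul_le_mul_of_nonneg_right (hweight j).le (hpos _).le)
    (mul_lt_mul_of_pos_right (hweight 0) (hpos _))
    (((summable_nat_add_iff (n + 1)).2 hs).mul_left _) ((summable_nat_add_iff (n + 1)).2 hws)

lemma exists_rescale_preserving_moment (hs : Summable h)
    (hws : Summable fun j : ℕ => ((j : ℝ) - C) * h j) (h0 : ∑' j : ℕ, ((j : ℝ) - C) * h j = 0)
    {n : ℕ} (hn : 1 ≤ n) {x y lo hi : ℝ} (hx : x < hi) (hy : lo < y) :
    ∃ a c : ℝ, 1 < a ∧ c < a ∧ a * x < hi ∧ lo < c * y / a ∧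
      (a - 1) * (((n : ℝ) - C) * h n) +
        (c - 1) * ∑' j : ℕ, ((↑(j + (n + 1)) : ℝ) - C) * h (j + (n + 1)) = 0 ∧
      0 < (a - 1) * h n + (c - 1) * ∑' j, h (j + (n + 1)) := by
  set B := ((n : ℝ) - C) * h n with hB
  set S := ∑' j, h (j + (n + 1))
  set D := ∑' j : ℕ, ((↑(j + (n + 1)) : ℝ) - C) * h (j + (n + 1))
  have hsplit : ∑ j ∈ range n, ((j : ℝ) - C) * h j + B + D = 0 := by
    rw [← h0, ← hws.sum_add_tsum_nat_add (n + 1), sum_range_succ]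
  have hD : 0 < D := by
    linarith [sum_range_sub_mul_neg hpos hws h0 (n := n + 1) (by omega),
      sum_range_succ (fun j : ℕ => ((j : ℝ) - C) * h j) n]
  have hBD : -1 < B / D := by
    rw [lt_div_iff₀ hD]
    linarith [sum_range_sub_mul_neg hpos hws h0 hn]
  have hBS : B * S / D < h n := by
    rw [div_lt_iff₀ hD, hB, mul_right_comm, mul_comm _ (h n)]
    exact mul_lt_mul_of_pos_left (mul_tsum_lt_tsum_sub_mul hpos hs hws n) (hpos n)
  obtain ⟨t, ht, htx, hty⟩ := exists_pos_mul_lt_and_lt_div (k := B / D) hx hy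
  refine ⟨1 + t, 1 - t * (B / D), by linarith, by nlinarith, htx, hty, ?_, ?_⟩
  · field_simp
    ring
  · have : (1 - t * (B / D) - 1) * S = -(t * (B * S / D)) := by ring
    nlinarith

end Moment

theorem stmt6_general (rlo rhi C : ℝ) (h0 : 0 < rlo)
    (ρ : ℕ → ℝ) (hρ : ∀ j : ℕ, 1 ≤ j → ρ j ∈ Set.Icc rlo rhi)
    (hsum : Summable (hseq ρ))
    (hmsum : Summable (fun j : ℕ => ((j : ℝ) - C) * hseq ρ j))
    (hm : (∑' j : ℕ, ((j : ℝ) - C) * hseq ρ j) = 0)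
    (i : ℕ) (hi : 1 ≤ i) (hρi : ρ i < rhi) (hρi1 : rlo < ρ (i + 1)) :
    ∃ ε > 0, ∃ δ > 0,
      ρ i + ε ≤ rhi ∧ rlo ≤ ρ (i + 1) - δ ∧
      Summable (hseq (pert ρ i ε δ)) ∧
      Summable (fun j : ℕ => ((j : ℝ) - C) * hseq (pert ρ i ε δ) j) ∧
      (∑' j : ℕ, ((j : ℝ) - C) * hseq (pert ρ i ε δ) j) = 0 ∧
      (∑' j : ℕ, hseq ρ j) < ∑' j : ℕ, hseq (pert ρ i ε δ) j := by
  have hρpos : ∀ j, 1 ≤ j → 0 < ρ j := fun j hj => h0.trans_le (hρ j hj).1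
  obtain ⟨a, c, ha, hca, hax, hcy, hmoment, hgain⟩ :=
    exists_rescale_preserving_moment (hseq_pos hρpos) hsum hmsum hm hi hρi hρi1
  have hε : ρ i + (a - 1) * ρ i = a * ρ i := by ring
  have hεδ : (ρ i + (a - 1) * ρ i) * (ρ (i + 1) - (ρ (i + 1) - c * ρ (i + 1) / a))
      = c * (ρ i * ρ (i + 1)) := by
    rw [hε, sub_sub_cancel]
    field_simp
  obtain ⟨hs', hf'⟩ := hsum.tsum_eq_of_rescale (fun j hj => hseq_pert_of_lt hj)
    (hseq_pert_self hi hε) (fun j => hseq_pert_of_gt hi hεδ (by omega))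
  obtain ⟨hms', hm'⟩ := hmsum.tsum_eq_of_rescale (a := a) (c := c)
    (g' := fun j : ℕ => ((j : ℝ) - C) * hseq (pert ρ i _ _) j)
    (fun j hj => by rw [hseq_pert_of_lt hj]) (by rw [hseq_pert_self hi hε]; ring)
    (fun j => by rw [hseq_pert_of_gt hi hεδ (by omega)]; ring)
  refine ⟨(a - 1) * ρ i, mul_pos (by linarith) (hρpos i hi), ρ (i + 1) - c * ρ (i + 1) / a,
    ?_, by linarith, by linarith, hs', hms', by linarith, by linarith⟩
  rw [gt_iff_lt, sub_pos, div_lt_iff₀ (by linarith)]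
  nlinarith [hρpos (i + 1) (by omega)]

/-- Let `ρ_i ∈ [ρ̲, ρ̄]`, `∑_j h_j < ∞`, and
`m(ρ) = ∑_i (i - C) h_i = 0` (a convergent, hence absolutely convergent,
series). Suppose `ρ_i < ρ̄` and `ρ_{i+1} > ρ̲` for some `i ≥ 1`. Then there
are `ε, δ > 0` such that the perturbed sequence `ρ̃` (staying in `[ρ̲, ρ̄]`)
satisfies `m(ρ̃) = 0` and `f(ρ̃) > f(ρ)`, where `f(ρ) = ∑_j h_j = 1/π_0`.
In particular `ρ` is not optimal for minimizing `π_0` subject to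
`∑_i i π_i ≤ C`. -/
theorem stmt6 (rlo rhi C : ℝ) (h0 : 0 < rlo) (hlt : rlo < rhi) (hC : 0 < C)
    (ρ : ℕ → ℝ) (hρ : ∀ j : ℕ, 1 ≤ j → ρ j ∈ Set.Icc rlo rhi)
    (hsum : Summable (hseq ρ))
    (hmsum : Summable (fun j : ℕ => ((j : ℝ) - C) * hseq ρ j))
    (hm : (∑' j : ℕ, ((j : ℝ) - C) * hseq ρ j) = 0)
    (i : ℕ) (hi : 1 ≤ i) (hρi : ρ i < rhi) (hρi1 : rlo < ρ (i + 1)) :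
    ∃ ε > 0, ∃ δ > 0,
      ρ i + ε ≤ rhi ∧ rlo ≤ ρ (i + 1) - δ ∧
      Summable (hseq (pert ρ i ε δ)) ∧
      Summable (fun j : ℕ => ((j : ℝ) - C) * hseq (pert ρ i ε δ) j) ∧
      (∑' j : ℕ, ((j : ℝ) - C) * hseq (pert ρ i ε δ) j) = 0 ∧
      (∑' j : ℕ, hseq ρ j) < ∑' j : ℕ, hseq (pert ρ i ε δ) j :=
  stmt6_general rlo rhi C h0 ρ hρ hsum hmsum hm i hi hρi hρi1
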